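/- arXiv:2601.19807 — 6 statements merged into one kernel-verified Lean document; each statement's English description precedes it below -/
import Mathlib

section
/- For every real number x ≥ 2, the set S_x = {⌊x^n⌋ : n ∈ ℕ, n ≥ 1} is a Sidon set; that is, whenever ⌊x^p⌋ + ⌊x^q⌋ = ⌊x^r⌋ + ⌊x^s⌋ with p ≤ q, r ≤ s, we have p = r and q = s. -/
theorem stmt_0 (x : ℝ) (hx : 2 ≤ x) (p q r s : ℕ)
    (hp : 1 ≤ p) (hq : 1 ≤ q) (hr : 1 ≤ r) (hs : 1 ≤ s)
    (hpq : p ≤ q) (hrs : r ≤ s)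
    (h : ⌊x ^ p⌋ + ⌊x ^ q⌋ = ⌊x ^ r⌋ + ⌊x ^ s⌋) :
    p = r ∧ q = s := by
  have hx1 : (1:ℝ) ≤ x := by linarith
  have hx0 : (0:ℝ) ≤ x := by linarith
  have key : ∀ a b c d : ℕ, 1 ≤ c → a ≤ b → b < d →
      ⌊x ^ a⌋ + ⌊x ^ b⌋ ≠ ⌊x ^ c⌋ + ⌊x ^ d⌋ := by
    intro a b c d hc hab hbd heq
    have h1 : x ^ a ≤ x ^ b := pow_le_pow_right₀ hx1 hab
    have hbpos : (0:ℝ) ≤ x ^ b := pow_nonneg hx0 b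
    have h2 : x ^ b * 2 ≤ x ^ b * x := mul_le_mul_of_nonneg_left hx hbpos
    have h3 : x ^ b * x = x ^ (b+1) := (pow_succ x b).symm
    have h4 : x ^ (b+1) ≤ x ^ d := pow_le_pow_right₀ hx1 hbd
    have h5 : x ≤ x ^ c := le_self_pow₀ hx1 (by omega)
    have f1 : (⌊x ^ a⌋ : ℝ) ≤ x ^ a := Int.floor_le _
    have f2 : (⌊x ^ b⌋ : ℝ) ≤ x ^ b := Int.floor_le _
    have f3 : x ^ c - 1 < (⌊x ^ c⌋ : ℝ) := Int.sub_one_lt_floor _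
    have f4 : x ^ d - 1 < (⌊x ^ d⌋ : ℝ) := Int.sub_one_lt_floor _
    have := congrArg (Int.cast : ℤ → ℝ) heq
    push_cast at this
    linarith
  have mono : ∀ a b : ℕ, 1 ≤ a → a < b → ⌊x ^ a⌋ < ⌊x ^ b⌋ := by
    intro a b ha hab
    have hapos : (0:ℝ) ≤ x ^ a := pow_nonneg hx0 a
    have h2 : x ^ a * 2 ≤ x ^ a * x := mul_le_mul_of_nonneg_left hx hapos
    have h3 : x ^ a * x = x ^ (a+1) := (pow_succ x a).symm
    have h4 : x ^ (a+1) ≤ x ^ b := pow_le_pow_right₀ hx1 hab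
    have h5 : x ≤ x ^ a := le_self_pow₀ hx1 (by omega)
    have f1 : (⌊x ^ a⌋ : ℝ) ≤ x ^ a := Int.floor_le _
    have f2 : x ^ b - 1 < (⌊x ^ b⌋ : ℝ) := Int.sub_one_lt_floor _
    have : (⌊x ^ a⌋ : ℝ) < (⌊x ^ b⌋ : ℝ) := by linarith
    exact_mod_cast this
  have hqs : q = s := by
    rcases lt_trichotomy q s with h1 | h1 | h1
    · exact absurd h (key p q r s hr hpq h1)
    · exact h1
    · exact absurd h.symm (key r s p q hp hrs h1)
  subst hqs
  have hpr : ⌊x ^ p⌋ = ⌊x ^ r⌋ := by omega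
  refine ⟨?_, rfl⟩
  rcases lt_trichotomy p r with h1 | h1 | h1
  · exact absurd hpr (ne_of_lt (mono p r hp h1))
  · exact h1
  · exact absurd hpr.symm (ne_of_lt (mono r p hr h1))
end

section
/- Let Q be a nonzero real polynomial of degree at most D, and let [α, β] be a compact interval with α < β. Then there exists a constant K < ∞ (depending on Q, α, β) such that for all ε ∈ (0,1), the Lebesgue measure of {y ∈ [α, β] : |Q(y)| < ε} is at most K · ε^{1/D}. -/
open MeasureTheory Polynomial

lemma aux_pow_card_le_prod (t : ℝ) (ht : 0 ≤ t) (s : Multiset ℝ)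
    (h : ∀ x ∈ s, t ≤ x) : t ^ Multiset.card s ≤ s.prod := by
  induction s using Multiset.induction with
  | empty => simp
  | cons a s ih =>
    have ha := h a (Multiset.mem_cons_self a s)
    have hs := ih (fun x hx => h x (Multiset.mem_cons_of_mem hx))
    have h0 : (0:ℝ) ≤ t ^ Multiset.card s := pow_nonneg ht _
    simp only [Multiset.card_cons, Multiset.prod_cons, pow_succ]
    calc t ^ Multiset.card s * t ≤ s.prod * a :=
          mul_le_mul hs ha ht (le_trans h0 hs)
      _ = a * s.prod := mul_comm _ _

theorem stmt_5 (Q : Polynomial ℝ) (hQ : Q ≠ 0) (D : ℕ) (hD : Q.natDegree ≤ D)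
    (α β : ℝ) (hαβ : α < β) :
    ∃ K : ℝ, ∀ ε : ℝ, ε ∈ Set.Ioo (0 : ℝ) 1 →
      volume {y ∈ Set.Icc α β | |Q.eval y| < ε} ≤
        ENNReal.ofReal (K * ε ^ ((1 : ℝ) / D)) := by
  rcases Nat.eq_zero_or_pos D with hD0 | hDpos
  · refine ⟨β - α, fun ε hε => ?_⟩
    subst hD0
    simp only [Nat.cast_zero, div_zero, Real.rpow_zero, mul_one]
    refine le_trans (measure_mono (Set.sep_subset _ _)) ?_
    rw [Real.volume_Icc]
  · -- main case D ≥ 1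
    set S := Q.roots with hS
    obtain ⟨R, hQR⟩ := Q.prod_multiset_X_sub_C_dvd
    have hR0 : R ≠ 0 := by
      rintro rfl; rw [mul_zero] at hQR; exact hQ hQR
    have hProd0 : (S.map fun a => X - C a).prod ≠ 0 := by
      intro h
      rw [h, zero_mul] at hQR; exact hQ hQR
    have hRroots : R.roots = 0 := by
      have h1 : Q.roots = S + R.roots := by
        conv_lhs => rw [hQR]
        rw [roots_mul (hQR ▸ hQ), roots_multiset_prod_X_sub_C]
      exact (left_eq_add.mp h1)
    have hRne : ∀ y : ℝ, R.eval y ≠ 0 := by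
      intro y hy
      have : y ∈ R.roots := by
        rw [mem_roots hR0]; exact hy
      rw [hRroots] at this; exact absurd this (Multiset.notMem_zero y)
    -- min of |R| on Icc
    obtain ⟨y₀, hy₀, hmin⟩ := isCompact_Icc.exists_isMinOn (Set.nonempty_Icc.mpr hαβ.le)
      ((Polynomial.continuous R).abs.continuousOn (s := Set.Icc α β))
    set δ : ℝ := min (|R.eval y₀|) 1 with hδ
    have hδpos : 0 < δ := lt_min (abs_pos.mpr (hRne y₀)) one_pos
    have hδ1 : δ ≤ 1 := min_le_right _ _
    have hδle : ∀ y ∈ Set.Icc α β, δ ≤ |R.eval y| := fun y hy =>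
      le_trans (min_le_left _ _) (hmin hy)
    set M : ℝ := (1 / δ) ^ ((1 : ℝ) / D) with hM
    have hMpos : 0 < M := Real.rpow_pos_of_pos (by positivity) _
    have hM1 : 1 ≤ M := Real.one_le_rpow ((le_div_iff₀ hδpos).mpr (by linarith)) (by positivity)
    refine ⟨(2 * D + (β - α)) * M, fun ε hε => ?_⟩
    obtain ⟨hε0, hε1⟩ := hε
    set t : ℝ := (ε / δ) ^ ((1 : ℝ) / D) with ht
    have htpos : 0 < t := Real.rpow_pos_of_pos (by positivity) _
    have htM : t = M * ε ^ ((1 : ℝ) / D) := by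
      rw [ht, hM, div_eq_mul_inv, ← one_div δ,
        Real.mul_rpow hε0.le (by positivity), mul_comm]
    have hεpow : 0 < ε ^ ((1 : ℝ) / D) := Real.rpow_pos_of_pos hε0 _
    have hcard : (Multiset.card S : ℕ) ≤ D := le_trans (Q.card_roots' ) hD
    by_cases ht1 : t ≤ 1
    · -- covering argument
      have htD : t ^ D = ε / δ := by
        rw [ht, ← Real.rpow_natCast ((ε / δ) ^ ((1:ℝ)/D)) D, ← Real.rpow_mul (by positivity),
          one_div, inv_mul_cancel₀ (by exact_mod_cast hDpos.ne'), Real.rpow_one]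
      have hsub : {y ∈ Set.Icc α β | |Q.eval y| < ε} ⊆
          ⋃ r ∈ S.toFinset, Metric.ball r t := by
        rintro y ⟨hyI, hyQ⟩
        by_contra hy
        simp only [Set.mem_iUnion, Metric.mem_ball, not_exists, not_lt,
          Multiset.mem_toFinset] at hy
        have hdist : ∀ r ∈ S, t ≤ |y - r| := fun r hr => by
          have := hy r hr; rwa [Real.dist_eq] at this
        have hPeval : ((S.map fun a => X - C a).prod).eval y
            = (S.map fun a => y - a).prod := by
          rw [eval_multiset_prod, Multiset.map_map]
          simp
        have habs : |((S.map fun a => X - C a).prod).eval y|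
            = (S.map fun a => |y - a|).prod := by
          have hmm : (Multiset.map (fun a => |y - a|) S)
              = Multiset.map (fun x : ℝ => |x|) (Multiset.map (fun a => y - a) S) := by
            rw [Multiset.map_map]; rfl
          rw [hPeval, hmm]
          exact (Multiset.prod_hom _ (absHom (α := ℝ)).toMonoidHom).symm
        have hprodge : t ^ (Multiset.card S) ≤ (S.map fun a => |y - a|).prod := by
          rw [show Multiset.card S = Multiset.card (S.map fun a => |y - a|) by simp]
          refine aux_pow_card_le_prod t htpos.le _ (fun x hx => ?_)
          obtain ⟨r, hr, rfl⟩ := Multiset.mem_map.mp hx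
          exact hdist r hr
        have hge : ε ≤ |Q.eval y| := by
          have h1 : t ^ D ≤ t ^ (Multiset.card S) :=
            pow_le_pow_of_le_one htpos.le ht1 hcard
          calc ε = (ε / δ) * δ := by field_simp
            _ = t ^ D * δ := by rw [htD]
            _ ≤ t ^ (Multiset.card S) * δ := by
                exact mul_le_mul_of_nonneg_right h1 hδpos.le
            _ ≤ (S.map fun a => |y - a|).prod * |R.eval y| := by
                refine mul_le_mul hprodge (hδle y hyI) hδpos.le ?_
                exact le_trans (by positivity) hprodge
            _ = |Q.eval y| := by rw [hQR, eval_mul, abs_mul, habs]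
        exact absurd hyQ (not_lt.mpr hge)
      calc volume {y ∈ Set.Icc α β | |Q.eval y| < ε}
          ≤ volume (⋃ r ∈ S.toFinset, Metric.ball r t) := measure_mono hsub
        _ ≤ ∑ r ∈ S.toFinset, volume (Metric.ball r t) := measure_biUnion_finset_le _ _
        _ = ∑ r ∈ S.toFinset, ENNReal.ofReal (2 * t) := by
            simp [Real.volume_ball]
        _ = (S.toFinset.card : ENNReal) * ENNReal.ofReal (2 * t) := by
            rw [Finset.sum_const, nsmul_eq_mul]
        _ ≤ (D : ENNReal) * ENNReal.ofReal (2 * t) := by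
            gcongr
            exact_mod_cast le_trans S.toFinset_card_le hcard
        _ = ENNReal.ofReal (2 * D * t) := by
            rw [← ENNReal.ofReal_natCast D, ← ENNReal.ofReal_mul (by positivity)]
            ring_nf
        _ ≤ ENNReal.ofReal ((2 * D + (β - α)) * M * ε ^ ((1 : ℝ) / D)) := by
            apply ENNReal.ofReal_le_ofReal
            rw [htM]
            nlinarith [hαβ.le, hMpos, hεpow]
    · -- t > 1 : trivial bound
      push_neg at ht1
      calc volume {y ∈ Set.Icc α β | |Q.eval y| < ε}
          ≤ volume (Set.Icc α β) := measure_mono (Set.sep_subset _ _)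
        _ = ENNReal.ofReal (β - α) := Real.volume_Icc
        _ ≤ ENNReal.ofReal ((2 * D + (β - α)) * M * ε ^ ((1 : ℝ) / D)) := by
            apply ENNReal.ofReal_le_ofReal
            have h1 : β - α ≤ (β - α) * t := le_mul_of_one_le_right (by linarith) ht1.le
            rw [htM] at h1
            nlinarith [hαβ.le, hMpos, hεpow, htpos]
end

section
/- For almost every x ∈ (1, 2) (with respect to Lebesgue measure), there exists N₀ ∈ ℕ such that the set {⌊x^n⌋ : n ≥ N₀} is a Sidon set. -/
/-!
A nontrivial coincidence `⌊x^p⌋ + ⌊x^q⌋ = ⌊x^r⌋ + ⌊x^s⌋` with large exponents forces, after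
reordering, `q < s ≤ r < p` and `|x^p + x^q - x^r - x^s| < 2`, because distinct large powers of
`x` are at least `2` apart. For `x ∈ (c, 2)` with `c > 1`, such `x` form a set of measure
`O(c^(-p/5))` uniformly in `q, r, s`. Either `p - r` is so large that the expression exceeds `2`;
or one of the gaps `r - s`, `s - q` is large, and factoring out `x^r` or `x^s` leaves a function
with derivative `≥ 1/2` that must be exponentially small; or `q` is large, and then
`x^(p-q) - x^(r-q) - x^(s-q) + 1` is exponentially small. The sublevel sets of the latter are
controlled through three derivatives: up to positive factors each derivative has one sign change
fewer, so every level splits into few monotone pieces. Summing over the `p^3` triples gives a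
convergent series, and Borel–Cantelli concludes.
-/

open MeasureTheory Set Filter

lemma mul_measureReal_le_sub_of_hasDerivAt {f f' : ℝ → ℝ} {S : Set ℝ} {a b θ : ℝ}
    (hf : ∀ x, HasDerivAt f (f' x) x) (hab : a ≤ b) (hS : MeasurableSet S)
    (hSab : S ⊆ Icc a b) (hf' : ∀ x ∈ Ioo a b, 0 ≤ f' x) (hθ : ∀ x ∈ S, θ ≤ f' x) :
    θ * volume.real S ≤ f b - f a := by
  have hfc : ContinuousOn f (Icc a b) := HasDerivAt.continuousOn fun x _ => hf x
  have hint : IntegrableOn f' (Ioc a b) :=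
    intervalIntegral.integrableOn_deriv_of_nonneg hfc (fun x _ => hf x) hf'
  have hfin : volume S ≠ ⊤ := ((measure_mono hSab).trans_lt measure_Icc_lt_top).ne
  calc θ * volume.real S = ∫ _ in S, θ := by simp [mul_comm]
    _ ≤ ∫ x in S, f' x :=
      setIntegral_mono_on (integrableOn_const hfin)
        (((integrableOn_Icc_iff_integrableOn_Ioc (by simp)).2 hint).mono_set hSab) hS hθ
    _ ≤ ∫ x in Ioo a b, f' x :=
      setIntegral_mono_set (hint.mono_set Ioo_subset_Ioc_self)
        (ae_restrict_of_forall_mem measurableSet_Ioo hf')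
        (hSab.eventuallyLE.trans Ioo_ae_eq_Icc.symm.le)
    _ = f b - f a := by
      rw [← integral_Ioc_eq_integral_Ioo, ← intervalIntegral.integral_of_le hab]
      exact intervalIntegral.integral_eq_sub_of_hasDerivAt_of_le hab hfc
        (fun x _ => hf x) ((intervalIntegrable_iff_integrableOn_Ioc_of_le hab).2 hint)

lemma volume_inter_abs_lt_inter_le_deriv_le {f f' : ℝ → ℝ} {J : Set ℝ} {δ θ : ℝ}
    (hf : ∀ x, HasDerivAt f (f' x) x) (hJ : J.OrdConnected) (hJb : Bornology.IsBounded J)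
    (hθ : 0 < θ) (hf' : ∀ x ∈ J, 0 ≤ f' x) :
    volume (J ∩ {x | |f x| < δ} ∩ {x | θ ≤ f' x}) ≤ ENNReal.ofReal (2 * δ / θ) := by
  set S := J ∩ {x | |f x| < δ} ∩ {x | θ ≤ f' x}
  rcases S.eq_empty_or_nonempty with hS | hS
  · simp [hS]
  have hfc : Continuous f := continuous_iff_continuousAt.2 fun x => (hf x).continuousAt
  have hSm : MeasurableSet S :=
    (hJ.measurableSet.inter (measurableSet_lt (by fun_prop) measurable_const)).inter
      (measurableSet_le measurable_const
        ((funext fun x => (hf x).deriv : deriv f = f') ▸ measurable_deriv f))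
  have hbdd : Bornology.IsBounded S := hJb.subset fun x hx => hx.1.1
  have hSmM : S ⊆ Icc (sInf S) (sSup S) := fun x hx =>
    ⟨csInf_le hbdd.bddBelow hx, le_csSup hbdd.bddAbove hx⟩
  -- `|f| ≤ δ` at both ends of `[inf S, sup S]`, and `f' ≥ 0` in between as `J` is order-connected.
  have hJmM : Ioo (sInf S) (sSup S) ⊆ J := fun z hz => by
    obtain ⟨a, ha, haz⟩ := exists_lt_of_csInf_lt hS hz.1
    obtain ⟨b, hb, hzb⟩ := exists_lt_of_lt_csSup hS hz.2
    exact hJ.out ha.1.1 hb.1.1 ⟨haz.le, hzb.le⟩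
  have hclosure : closure S ⊆ {y | |f y| ≤ δ} :=
    closure_minimal (fun x hx => (show |f x| < δ from hx.1.2).le)
      (isClosed_le (by fun_prop) continuous_const)
  have hm := abs_le.1 (show |f (sInf S)| ≤ δ from hclosure (csInf_mem_closure hS hbdd.bddBelow))
  have hM := abs_le.1 (show |f (sSup S)| ≤ δ from hclosure (csSup_mem_closure hS hbdd.bddAbove))
  have key := mul_measureReal_le_sub_of_hasDerivAt hf (csInf_le_csSup hS hbdd.bddBelow
    hbdd.bddAbove) hSm hSmM (fun x hx => hf' x (hJmM hx)) fun x hx => hx.2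
  rw [← ofReal_measureReal hbdd.measure_lt_top.ne]
  exact ENNReal.ofReal_le_ofReal ((le_div_iff₀ hθ).2 (by linarith))

lemma volume_inter_abs_lt_inter_le_abs_deriv_le {f f' : ℝ → ℝ} {J : Set ℝ} {δ θ : ℝ}
    (hf : ∀ x, HasDerivAt f (f' x) x) (hJ : J.OrdConnected) (hJb : Bornology.IsBounded J)
    (hθ : 0 < θ) (hf' : (∀ x ∈ J, 0 ≤ f' x) ∨ ∀ x ∈ J, f' x ≤ 0) :
    volume (J ∩ {x | |f x| < δ} ∩ {x | θ ≤ |f' x|}) ≤ ENNReal.ofReal (2 * δ / θ) := by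
  rcases hf' with hf' | hf'
  · refine (measure_mono ?_).trans (volume_inter_abs_lt_inter_le_deriv_le hf hJ hJb hθ hf')
    rintro x ⟨hx, hθx⟩
    exact ⟨hx, by rwa [mem_ofPred_eq, abs_of_nonneg (hf' x hx.1)] at hθx⟩
  · refine (measure_mono ?_).trans (volume_inter_abs_lt_inter_le_deriv_le (f := -f)
      (fun x => (hf x).neg) hJ hJb hθ fun x hx => neg_nonneg.2 (hf' x hx))
    rintro x ⟨⟨hxJ, hx⟩, hθx⟩
    exact ⟨⟨hxJ, by simpa using hx⟩, by rwa [mem_ofPred_eq, abs_of_nonpos (hf' x hxJ)] at hθx⟩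

lemma QuasiconvexOn.exists_ordConnected_cover {s : Set ℝ} {g : ℝ → ℝ}
    (hg : QuasiconvexOn ℝ s g) (hs : s.OrdConnected) :
    ∃ L M R : Set ℝ, L.OrdConnected ∧ M.OrdConnected ∧ R.OrdConnected ∧ L ∪ M ∪ R = s ∧
      (∀ x ∈ L, 0 ≤ g x) ∧ (∀ x ∈ M, g x ≤ 0) ∧ ∀ x ∈ R, 0 ≤ g x := by
  have hM : {x ∈ s | g x ≤ 0}.OrdConnected := (hg 0).ordConnected
  refine ⟨{x ∈ s | ∀ y ∈ s, y ≤ x → 0 ≤ g y}, {x ∈ s | g x ≤ 0},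
    {x ∈ s | ∀ y ∈ s, x ≤ y → 0 ≤ g y},
    ⟨fun x hx y hy z hz => ⟨hs.out hx.1 hy.1 hz, fun w hw hwz => hy.2 w hw (hwz.trans hz.2)⟩⟩,
    hM, ⟨fun x hx y hy z hz => ⟨hs.out hx.1 hy.1 hz, fun w hw hzw => hx.2 w hw (hz.1.trans hzw)⟩⟩,
    Subset.antisymm (union_subset (union_subset (sep_subset _ _) (sep_subset _ _))
      (sep_subset _ _)) fun x hx => ?_,
    fun x hx => hx.2 x hx.1 le_rfl, fun x hx => hx.2, fun x hx => hx.2 x hx.1 le_rfl⟩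
  by_contra h
  have hxL : ¬∀ y ∈ s, y ≤ x → 0 ≤ g y := fun h' => h (Or.inl (Or.inl ⟨hx, h'⟩))
  have hxR : ¬∀ y ∈ s, x ≤ y → 0 ≤ g y := fun h' => h (Or.inr ⟨hx, h'⟩)
  push Not at hxL hxR
  obtain ⟨y, hy, hyx, hgy⟩ := hxL
  obtain ⟨z, hz, hxz, hgz⟩ := hxR
  exact h (Or.inl (Or.inr (hM.out ⟨hy, hgy.le⟩ ⟨hz, hgz.le⟩ ⟨hyx, hxz⟩)))

lemma volume_inter_abs_lt_inter_le_abs_deriv_le_of_quasiconvexOn {f f' g : ℝ → ℝ}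
    {s : Set ℝ} {δ θ : ℝ} (hf : ∀ x, HasDerivAt f (f' x) x) (hs : s.OrdConnected)
    (hsb : Bornology.IsBounded s) (hθ : 0 < θ) (hg : QuasiconvexOn ℝ s g)
    (hfg : ∀ x ∈ s, ∃ ω > 0, f' x = ω * g x) :
    volume (s ∩ {x | |f x| < δ} ∩ {x | θ ≤ |f' x|}) ≤ ENNReal.ofReal (6 * δ / θ) := by
  rcases le_or_gt δ 0 with hδ | hδ
  · refine (measure_mono (t := ∅) fun x hx => ?_).trans (by simp)
    exact (abs_nonneg _).not_gt (hx.1.2.trans_le hδ)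
  obtain ⟨L, M, R, hL, hM, hR, hs_eq, hgL, hgM, hgR⟩ := hg.exists_ordConnected_cover hs
  have hpiece : ∀ J ⊆ s, J.OrdConnected → ((∀ x ∈ J, 0 ≤ g x) ∨ ∀ x ∈ J, g x ≤ 0) →
      volume (J ∩ {x | |f x| < δ} ∩ {x | θ ≤ |f' x|}) ≤ ENNReal.ofReal (2 * δ / θ) := by
    intro J hJs hJ hgJ
    refine volume_inter_abs_lt_inter_le_abs_deriv_le hf hJ (hsb.subset hJs) hθ ?_
    rcases hgJ with hgJ | hgJ
    · refine Or.inl fun x hx => ?_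
      obtain ⟨ω, hω, hfx⟩ := hfg x (hJs hx)
      exact hfx ▸ mul_nonneg hω.le (hgJ x hx)
    · refine Or.inr fun x hx => ?_
      obtain ⟨ω, hω, hfx⟩ := hfg x (hJs hx)
      exact hfx ▸ mul_nonpos_of_nonneg_of_nonpos hω.le (hgJ x hx)
  rw [← hs_eq, union_inter_distrib_right, union_inter_distrib_right, union_inter_distrib_right,
    union_inter_distrib_right]
  calc _ ≤ ENNReal.ofReal (2 * δ / θ) + ENNReal.ofReal (2 * δ / θ) + ENNReal.ofReal (2 * δ / θ) :=
        (measure_union_le _ _).trans (add_le_add ((measure_union_le _ _).trans (add_le_add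
          (hpiece L (hs_eq ▸ subset_union_left.trans subset_union_left) hL (Or.inl hgL))
          (hpiece M (hs_eq ▸ subset_union_right.trans subset_union_left) hM (Or.inr hgM))))
          (hpiece R (hs_eq ▸ subset_union_right) hR (Or.inl hgR)))
    _ = ENNReal.ofReal (6 * δ / θ) := by
        rw [← ENNReal.ofReal_add (by positivity) (by positivity),
          ← ENNReal.ofReal_add (by positivity) (by positivity)]
        ring_nf

lemma quasiconvexOn_Icc_of_hasDerivAt_eq_mul {u u' v : ℝ → ℝ} {α β : ℝ}
    (hu : ∀ x, HasDerivAt u (u' x) x) (hv : MonotoneOn v (Icc α β))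
    (huv : ∀ x ∈ Icc α β, ∃ ω > 0, u' x = ω * v x) :
    QuasiconvexOn ℝ (Icc α β) u := by
  intro r
  rw [convex_iff_ordConnected]
  refine ⟨fun x hx y hy z hz => ?_⟩
  have hI : Icc x y ⊆ Icc α β := ordConnected_Icc.out hx.1 hy.1
  have hcont : Continuous u := continuous_iff_continuousAt.2 fun x => (hu x).continuousAt
  refine ⟨hI hz, ?_⟩
  -- As `v` is monotone, `u' ≤ 0` on `[x, z]` or `u' ≥ 0` on `[z, y]`.
  rcases le_or_gt (v z) 0 with hvz | hvz
  · have hanti : AntitoneOn u (Icc x z) :=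
      antitoneOn_of_hasDerivWithinAt_nonpos (convex_Icc x z) hcont.continuousOn
        (fun w _ => (hu w).hasDerivWithinAt) fun w hw => by
          rw [interior_Icc] at hw
          have hwI : w ∈ Icc α β := hI ⟨hw.1.le, hw.2.le.trans hz.2⟩
          obtain ⟨ω, hω, h⟩ := huv w hwI
          exact h ▸ mul_nonpos_of_nonneg_of_nonpos hω.le ((hv hwI (hI hz) hw.2.le).trans hvz)
    exact (hanti ⟨le_rfl, hz.1⟩ ⟨hz.1, le_rfl⟩ hz.1).trans hx.2
  · have hmono : MonotoneOn u (Icc z y) :=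
      monotoneOn_of_hasDerivWithinAt_nonneg (convex_Icc z y) hcont.continuousOn
        (fun w _ => (hu w).hasDerivWithinAt) fun w hw => by
          rw [interior_Icc] at hw
          have hwI : w ∈ Icc α β := hI ⟨hz.1.trans hw.1.le, hw.2.le⟩
          obtain ⟨ω, hω, h⟩ := huv w hwI
          exact h ▸ mul_nonneg hω.le (hvz.le.trans (hv (hI hz) hwI hw.1.le))
    exact (hmono ⟨le_rfl, hz.2⟩ ⟨hz.2, le_rfl⟩ hz.2).trans hy.2

lemma volume_inter_abs_lt_le_add {f f' g : ℝ → ℝ} {s : Set ℝ} {δ θ : ℝ}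
    (hfg : ∀ x ∈ s, ∃ ω ≥ 1 / 2, f' x = ω * g x) :
    volume (s ∩ {x | |f x| < δ}) ≤
      volume (s ∩ {x | |f x| < δ} ∩ {x | θ ≤ |f' x|}) + volume (s ∩ {x | |g x| < 2 * θ}) := by
  refine (measure_mono fun x hx => ?_).trans (measure_union_le _ _)
  rcases le_or_gt θ |f' x| with hθx | hθx
  · exact Or.inl ⟨hx, hθx⟩
  · obtain ⟨ω, hω, hx'⟩ := hfg x hx.1
    refine Or.inr ⟨hx.1, ?_⟩
    rw [hx', abs_mul, abs_of_pos (by linarith)] at hθx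
    show |g x| < 2 * θ
    nlinarith [abs_nonneg (g x)]

lemma volume_Icc_inter_abs_lt_pow_three_le {h h' u u' v v' : ℝ → ℝ} {α β t : ℝ}
    (hh : ∀ x, HasDerivAt h (h' x) x) (hu : ∀ x, HasDerivAt u (u' x) x)
    (hv : ∀ x, HasDerivAt v (v' x) x)
    (hhu : ∀ x ∈ Icc α β, ∃ ω ≥ 1 / 2, h' x = ω * u x)
    (huv : ∀ x ∈ Icc α β, ∃ ω ≥ 1 / 2, u' x = ω * v x)
    (hv' : ∀ x ∈ Icc α β, 1 ≤ v' x) (ht : 0 < t) :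
    volume (Icc α β ∩ {x | |h x| < t ^ 3}) ≤ ENNReal.ofReal (22 * t) := by
  have hpos : ∀ {f' g : ℝ → ℝ}, (∀ x ∈ Icc α β, ∃ ω ≥ 1 / 2, f' x = ω * g x) →
      ∀ x ∈ Icc α β, ∃ ω > 0, f' x = ω * g x := fun hfg x hx => by
    obtain ⟨ω, hω, h⟩ := hfg x hx
    exact ⟨ω, by linarith, h⟩
  have hvmono : MonotoneOn v (Icc α β) :=
    monotoneOn_of_hasDerivWithinAt_nonneg (convex_Icc α β)
      (HasDerivAt.continuousOn fun x _ => hv x) (fun x _ => (hv x).hasDerivWithinAt)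
      fun x hx => zero_le_one.trans (hv' x (interior_subset hx))
  have hvol_v : volume (Icc α β ∩ {x | |v x| < 2 * t}) ≤ ENNReal.ofReal (2 * (2 * t) / 1) :=
    (measure_mono (t := Icc α β ∩ {x | |v x| < 2 * t} ∩ {x | 1 ≤ v' x})
      fun x hx => ⟨hx, hv' x hx.1⟩).trans
      (volume_inter_abs_lt_inter_le_deriv_le hv ordConnected_Icc (Metric.isBounded_Icc α β)
        one_pos fun x hx => zero_le_one.trans (hv' x hx))
  have hvol_u : volume (Icc α β ∩ {x | |u x| < 2 * t ^ 2}) ≤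
      ENNReal.ofReal (6 * (2 * t ^ 2) / t) + ENNReal.ofReal (2 * (2 * t) / 1) :=
    (volume_inter_abs_lt_le_add huv).trans (add_le_add
      (volume_inter_abs_lt_inter_le_abs_deriv_le_of_quasiconvexOn hu ordConnected_Icc
        (Metric.isBounded_Icc α β) ht (hvmono.quasiconvexOn (convex_Icc α β)) (hpos huv))
      hvol_v)
  -- The thresholds `t ^ 2` for `|h'|` and `t` for `|u'|` make the three levels contribute equally.
  calc volume (Icc α β ∩ {x | |h x| < t ^ 3})
      ≤ ENNReal.ofReal (6 * t ^ 3 / t ^ 2) +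
          (ENNReal.ofReal (6 * (2 * t ^ 2) / t) + ENNReal.ofReal (2 * (2 * t) / 1)) :=
        (volume_inter_abs_lt_le_add hhu).trans (add_le_add
          (volume_inter_abs_lt_inter_le_abs_deriv_le_of_quasiconvexOn hh ordConnected_Icc
            (Metric.isBounded_Icc α β) (by positivity)
            (quasiconvexOn_Icc_of_hasDerivAt_eq_mul hu hvmono (hpos huv)) (hpos hhu)) hvol_u)
    _ = ENNReal.ofReal (22 * t) := by
        rw [← ENNReal.ofReal_add (by positivity) (by positivity),
          ← ENNReal.ofReal_add (by positivity) (by positivity)]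
        congr 1
        field_simp
        ring

lemma mul_natCast_mul_pow_sub_one (x : ℝ) (n : ℕ) : x * (n * x ^ (n - 1)) = n * x ^ n := by
  cases n with
  | zero => simp
  | succ n => simp only [Nat.add_sub_cancel, pow_succ]; ring

lemma exists_half_le_of_mul_eq_pow_mul {x y z : ℝ} (hx : x ∈ Icc (1 : ℝ) 2) (k : ℕ)
    (h : x * y = x ^ k * z) : ∃ ω ≥ 1 / 2, y = ω * z := by
  have hx0 : 0 < x := by linarith [hx.1]
  refine ⟨x ^ k / x, ?_, ?_⟩
  · rw [ge_iff_le, div_le_div_iff₀ two_pos hx0]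
    linarith [one_le_pow₀ (n := k) hx.1, hx.2]
  · field_simp
    linarith

-- `u = x^(1-e) h'` and `v = x^(1+e-b) u'`: dividing by the lowest power makes that monomial
-- constant, so the next derivative loses it.
lemma volume_Icc_inter_abs_pow_sub_pow_sub_pow_add_one_lt_le {a b e : ℕ} (hba : b < a)
    (heb : e ≤ b) {t : ℝ} (ht : 0 < t) :
    volume (Icc 1 2 ∩ {x : ℝ | |x ^ a - x ^ b - x ^ e + 1| < t ^ 3}) ≤
      ENNReal.ofReal (22 * t) := by
  refine volume_Icc_inter_abs_lt_pow_three_le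
    (h' := fun x => a * x ^ (a - 1) - b * x ^ (b - 1) - e * x ^ (e - 1))
    (u := fun x => a * x ^ (a - e) - b * x ^ (b - e) - e)
    (u' := fun x => a * ((a - e : ℕ) * x ^ (a - e - 1)) - b * ((b - e : ℕ) * x ^ (b - e - 1)))
    (v := fun x => a * (a - e : ℕ) * x ^ (a - b) - b * (b - e : ℕ))
    (v' := fun x => a * (a - e : ℕ) * ((a - b : ℕ) * x ^ (a - b - 1)))
    (fun x => (((hasDerivAt_pow a x).sub (hasDerivAt_pow b x)).sub
      (hasDerivAt_pow e x)).add_const 1)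
    (fun x => (((hasDerivAt_pow _ x).const_mul _).sub
      ((hasDerivAt_pow _ x).const_mul _)).sub_const _)
    (fun x => ((hasDerivAt_pow _ x).const_mul _).sub_const _)
    (fun x hx => exists_half_le_of_mul_eq_pow_mul hx e ?_)
    (fun x hx => exists_half_le_of_mul_eq_pow_mul hx (b - e) ?_)
    (fun x hx => ?_) ht
  · linear_combination mul_natCast_mul_pow_sub_one x a - mul_natCast_mul_pow_sub_one x b
      - mul_natCast_mul_pow_sub_one x e - (a : ℝ) * pow_mul_pow_sub x (show e ≤ a by omega)
      + (b : ℝ) * pow_mul_pow_sub x heb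
  · have hsplit : x ^ (b - e) * x ^ (a - b) = x ^ (a - e) := by
      rw [← pow_add]; congr 1; omega
    linear_combination (a : ℝ) * mul_natCast_mul_pow_sub_one x (a - e)
      - (b : ℝ) * mul_natCast_mul_pow_sub_one x (b - e) - (a * (a - e : ℕ) : ℝ) * hsplit
  · have h1 : ∀ n : ℕ, 0 < n → (1 : ℝ) ≤ n := fun n hn => by exact_mod_cast hn
    exact one_le_mul_of_one_le_of_one_le (one_le_mul_of_one_le_of_one_le (h1 a (by omega))
      (h1 _ (by omega))) (one_le_mul_of_one_le_of_one_le (h1 _ (by omega)) (one_le_pow₀ hx.1))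

lemma abs_lt_of_abs_pow_mul_add_lt {x g R : ℝ} {n k : ℕ} (hx : 1 ≤ x) (hkn : k ≤ n)
    (hR : |R| ≤ x ^ k) (h : |x ^ n * g + R| < 2) : |g| < 3 / x ^ (n - k) := by
  have hx0 : 0 < x := by linarith
  have hxk : 0 < x ^ k := by positivity
  have hsplit : x ^ n * |g| = x ^ k * (x ^ (n - k) * |g|) := by
    rw [← mul_assoc, pow_mul_pow_sub x hkn]
  have hn : x ^ n * |g| < 3 * x ^ k := by
    have : |x ^ n * g| ≤ |x ^ n * g + R| + |R| := by simpa using abs_sub (x ^ n * g + R) R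
    rw [abs_mul, abs_of_pos (by positivity)] at this
    linarith [one_le_pow₀ (n := k) hx]
  rw [lt_div_iff₀ (by positivity), mul_comm]
  nlinarith

lemma volume_Ioo_inter_abs_lt_two_le_of_eq_pow_mul_add {f g g' R : ℝ → ℝ} {c : ℝ} {n k : ℕ}
    (hc : 1 ≤ c) (hkn : k ≤ n) (hg : ∀ x, HasDerivAt g (g' x) x)
    (hg' : ∀ x ∈ Icc c 2, 1 / 2 ≤ g' x) (hfg : ∀ x ∈ Ioo c 2, f x = x ^ n * g x + R x)
    (hR : ∀ x ∈ Ioo c 2, |R x| ≤ x ^ k) :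
    volume (Ioo c 2 ∩ {x | |f x| < 2}) ≤ ENNReal.ofReal (12 / c ^ (n - k)) := by
  have hsub : Ioo c 2 ∩ {x | |f x| < 2} ⊆
      Icc c 2 ∩ {x | |g x| < 3 / c ^ (n - k)} ∩ {x | 1 / 2 ≤ g' x} := by
    rintro x ⟨hx, hfx⟩
    have hgx := abs_lt_of_abs_pow_mul_add_lt (hc.trans hx.1.le) hkn (hR x hx)
      (by rw [← hfg x hx]; exact hfx)
    have : 3 / x ^ (n - k) ≤ 3 / c ^ (n - k) := by
      gcongr
      exact hx.1.le
    exact ⟨⟨Ioo_subset_Icc_self hx, hgx.trans_le this⟩, hg' x (Ioo_subset_Icc_self hx)⟩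
  refine (measure_mono hsub).trans ((volume_inter_abs_lt_inter_le_deriv_le hg ordConnected_Icc
    (Metric.isBounded_Icc c 2) (by norm_num) fun x hx => by linarith [hg' x hx]).trans_eq ?_)
  congr 1
  ring

def nearCollisionSet (p q r s : ℕ) : Set ℝ := {x | |x ^ p + x ^ q - x ^ r - x ^ s| < 2}

section nearCollisionSet

variable {c : ℝ} {p q r s : ℕ}

lemma Ioo_inter_nearCollisionSet_eq_empty (hc : 1 ≤ c) (h4 : 4 ≤ c ^ (p - r)) (hsr : s ≤ r)
    (hrp : r ≤ p) : Ioo c 2 ∩ nearCollisionSet p q r s = ∅ := by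
  refine eq_empty_of_forall_notMem fun x hx => ?_
  obtain ⟨⟨hcx, -⟩, hx⟩ := hx
  have hx1 : 1 ≤ x := hc.trans hcx.le
  have hx4 : 4 ≤ x ^ (p - r) := h4.trans (pow_le_pow_left₀ (by linarith) hcx.le _)
  have hsr' : x ^ s ≤ x ^ r := pow_le_pow_right₀ hx1 hsr
  have hr1 : 1 ≤ x ^ r := one_le_pow₀ hx1
  have hq0 : 0 < x ^ q := by positivity
  have hx' := (abs_lt.1 (show |x ^ p + x ^ q - x ^ r - x ^ s| < 2 from hx)).2
  rw [← pow_mul_pow_sub x hrp] at hx'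
  nlinarith

lemma volume_Ioo_inter_nearCollisionSet_le_rs (hc : 1 ≤ c) (hqs : q ≤ s) (hsr : s ≤ r)
    (hrp : r < p) :
    volume (Ioo c 2 ∩ nearCollisionSet p q r s) ≤ ENNReal.ofReal (12 / c ^ (r - s)) := by
  refine volume_Ioo_inter_abs_lt_two_le_of_eq_pow_mul_add (g := fun x => x ^ (p - r) - 1)
    (R := fun x => x ^ q - x ^ s) hc hsr (fun x => (hasDerivAt_pow _ x).sub_const 1)
    (fun x hx => ?_) (fun x _ => ?_) (fun x hx => ?_)
  · have hpr : (1 : ℝ) ≤ (p - r : ℕ) := by exact_mod_cast (by omega : 1 ≤ p - r)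
    nlinarith [one_le_pow₀ (n := p - r - 1) (hc.trans hx.1)]
  · linear_combination (pow_mul_pow_sub x hrp.le).symm
  · have hx1 : 1 ≤ x := hc.trans hx.1.le
    rw [abs_sub_comm, abs_of_nonneg (sub_nonneg.2 (pow_le_pow_right₀ hx1 hqs))]
    linarith [pow_pos (zero_lt_one.trans_le hx1) q]

lemma volume_Ioo_inter_nearCollisionSet_le_sq (hc : 1 ≤ c) (hqs : q ≤ s) (hsr : s ≤ r)
    (hrp : r < p) :
    volume (Ioo c 2 ∩ nearCollisionSet p q r s) ≤ ENNReal.ofReal (12 / c ^ (s - q)) := by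
  refine volume_Ioo_inter_abs_lt_two_le_of_eq_pow_mul_add
    (g := fun x => x ^ (p - s) - x ^ (r - s) - 1) (R := fun x => x ^ q) hc hqs
    (fun x => ((hasDerivAt_pow _ x).sub (hasDerivAt_pow _ x)).sub_const 1)
    (fun x hx => ?_) (fun x _ => ?_) (fun x hx => (abs_of_pos (pow_pos ?_ q)).le)
  · have hx1 : 1 ≤ x := hc.trans hx.1
    have hy : 1 ≤ x ^ (r - s) := one_le_pow₀ hx1
    have hz : 1 ≤ x ^ (p - r) := one_le_pow₀ hx1
    have hsplit : x ^ (p - s) = x ^ (r - s) * x ^ (p - r) := by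
      rw [← pow_add]; congr 1; omega
    have hcoef : ((p - s : ℕ) : ℝ) = (r - s : ℕ) + (p - r : ℕ) := by
      exact_mod_cast (by omega : p - s = (r - s) + (p - r))
    have hpr : (1 : ℝ) ≤ (p - r : ℕ) := by exact_mod_cast (by omega : 1 ≤ p - r)
    have hx_deriv : 1 ≤ x * ((p - s : ℕ) * x ^ (p - s - 1) - (r - s : ℕ) * x ^ (r - s - 1)) := by
      rw [mul_sub, mul_natCast_mul_pow_sub_one, mul_natCast_mul_pow_sub_one, hsplit, hcoef]
      nlinarith [mul_nonneg (mul_nonneg (Nat.cast_nonneg (α := ℝ) (r - s)) (by linarith :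
        (0 : ℝ) ≤ x ^ (r - s))) (sub_nonneg.2 hz),
        one_le_mul_of_one_le_of_one_le hpr (one_le_mul_of_one_le_of_one_le hy hz)]
    nlinarith [hx.2]
  · linear_combination (pow_mul_pow_sub x (hsr.trans hrp.le)).symm
      - (pow_mul_pow_sub x hsr).symm
  · linarith [hx.1]

lemma volume_Ioo_inter_nearCollisionSet_le_q (hc : 1 ≤ c) (hqs : q ≤ s) (hsr : s ≤ r)
    (hrp : r < p) :
    volume (Ioo c 2 ∩ nearCollisionSet p q r s) ≤ ENNReal.ofReal (44 / c ^ (q / 3)) := by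
  set t : ℝ := 2 / c ^ (q / 3)
  have hsub : Ioo c 2 ∩ nearCollisionSet p q r s ⊆
      Icc 1 2 ∩ {x : ℝ | |x ^ (p - q) - x ^ (r - q) - x ^ (s - q) + 1| < t ^ 3} := by
    rintro x ⟨hx, hfx⟩
    refine ⟨⟨hc.trans hx.1.le, hx.2.le⟩, ?_⟩
    have := abs_lt_of_abs_pow_mul_add_lt (g := x ^ (p - q) - x ^ (r - q) - x ^ (s - q) + 1)
      (R := 0) (k := 0) (n := q) (hc.trans hx.1.le) (Nat.zero_le _) (by simp) (by
        convert (show |x ^ p + x ^ q - x ^ r - x ^ s| < 2 from hfx) using 2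
        linear_combination pow_mul_pow_sub x (hqs.trans (hsr.trans hrp.le))
          - pow_mul_pow_sub x (hqs.trans hsr) - pow_mul_pow_sub x hqs)
    have ht : t ^ 3 = 8 / c ^ (3 * (q / 3)) := by rw [div_pow, ← pow_mul, mul_comm]; norm_num
    calc _ < 3 / x ^ q := by simpa using this
      _ ≤ 3 / c ^ q := by gcongr; exact hx.1.le
      _ ≤ t ^ 3 := ht ▸ div_le_div₀ (by norm_num) (by norm_num) (by positivity)
          (pow_le_pow_right₀ hc (Nat.mul_div_le q 3))
  refine (measure_mono hsub).trans ((volume_Icc_inter_abs_pow_sub_pow_sub_pow_add_one_lt_le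
    (by omega) (by omega) (by positivity)).trans_eq ?_)
  congr 1
  ring

/-- Since `p = (p - r) + (r - s) + (s - q) + q`, one of the four bounds above applies. -/
lemma volume_Ioo_inter_nearCollisionSet_le {G m : ℕ} (hc : 1 ≤ c) (hG : 4 ≤ c ^ G)
    (hqs : q ≤ s) (hsr : s ≤ r) (hrp : r < p) (hm : 5 * m ≤ p - G) :
    volume (Ioo c 2 ∩ nearCollisionSet p q r s) ≤ ENNReal.ofReal (44 / c ^ m) := by
  have hle : ∀ (C : ℝ) (j : ℕ), C ≤ 44 → m ≤ j →
      ENNReal.ofReal (C / c ^ j) ≤ ENNReal.ofReal (44 / c ^ m) := fun C j hC hj =>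
    ENNReal.ofReal_le_ofReal (div_le_div₀ (by norm_num) hC (by positivity)
      (pow_le_pow_right₀ hc hj))
  by_cases hpr : G ≤ p - r
  · rw [Ioo_inter_nearCollisionSet_eq_empty hc (hG.trans (pow_le_pow_right₀ hc hpr)) hsr
      hrp.le, measure_empty]
    exact zero_le
  by_cases hrs : m ≤ r - s
  · exact (volume_Ioo_inter_nearCollisionSet_le_rs hc hqs hsr hrp).trans
      (hle 12 _ (by norm_num) hrs)
  by_cases hsq : m ≤ s - q
  · exact (volume_Ioo_inter_nearCollisionSet_le_sq hc hqs hsr hrp).trans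
      (hle 12 _ (by norm_num) hsq)
  exact (volume_Ioo_inter_nearCollisionSet_le_q hc hqs hsr hrp).trans
    (hle 44 _ le_rfl (by omega))

end nearCollisionSet

lemma abs_add_sub_sub_lt_two_of_floor_add_eq {y₁ y₂ y₃ y₄ : ℝ}
    (h : ⌊y₁⌋ + ⌊y₂⌋ = ⌊y₃⌋ + ⌊y₄⌋) : |y₁ + y₂ - y₃ - y₄| < 2 := by
  have h' : (⌊y₁⌋ : ℝ) + ⌊y₂⌋ = ⌊y₃⌋ + ⌊y₄⌋ := by exact_mod_cast h
  rw [abs_lt]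
  constructor <;> linarith [Int.floor_le y₁, Int.floor_le y₂, Int.floor_le y₃, Int.floor_le y₄,
    Int.lt_floor_add_one y₁, Int.lt_floor_add_one y₂, Int.lt_floor_add_one y₃,
    Int.lt_floor_add_one y₄]

lemma two_le_pow_sub_pow {c x : ℝ} {L m n : ℕ} (hc : 1 < c) (hcx : c ≤ x)
    (hL : 2 ≤ (c - 1) * c ^ L) (hLm : L ≤ m) (hmn : m < n) : 2 ≤ x ^ n - x ^ m := by
  have hx : 1 ≤ x := hc.le.trans hcx
  have hcL : c ^ L ≤ x ^ m :=
    (pow_le_pow_right₀ hc.le hLm).trans (pow_le_pow_left₀ (by linarith) hcx m)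
  have hxn : x ^ (m + 1) ≤ x ^ n := pow_le_pow_right₀ hx hmn
  rw [pow_succ] at hxn
  nlinarith [mul_le_mul (sub_le_sub_right hcx 1) hcL (by positivity) (by linarith)]

lemma exists_lt_le_lt_of_abs_add_sub_sub_lt {F : ℕ → ℝ} {N : ℕ}
    (hF : ∀ m n, N ≤ m → m < n → 2 ≤ F n - F m) {p q r s : ℕ}
    (hp : N ≤ p) (hq : N ≤ q) (hr : N ≤ r) (hs : N ≤ s)
    (h₁ : ¬(p = r ∧ q = s)) (h₂ : ¬(p = s ∧ q = r)) (h : |F p + F q - F r - F s| < 2) :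
    ∃ p' q' r' s', N ≤ q' ∧ q' < s' ∧ s' ≤ r' ∧ r' < p' ∧
      |F p' + F q' - F r' - F s'| < 2 := by
  wlog hqp : q ≤ p generalizing p q r s
  · exact this hq hp hr hs (fun h' => h₂ ⟨h'.2, h'.1⟩) (fun h' => h₁ ⟨h'.2, h'.1⟩)
      (by rwa [add_comm (F q)]) (le_of_not_ge hqp)
  wlog hsr : s ≤ r generalizing r s
  · exact this hs hr h₂ h₁ (by convert h using 2; ring) (le_of_not_ge hsr)
  wlog hrp : r ≤ p generalizing p q r s
  · exact this hr hs hsr hp hq (fun h' => h₁ ⟨h'.1.symm, h'.2.symm⟩)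
      (fun h' => h₂ ⟨h'.2.symm, h'.1.symm⟩) (by rw [abs_sub_comm]; convert h using 2; ring)
      hqp (le_of_not_ge hrp)
  have hmono : ∀ m n, N ≤ m → m ≤ n → F m ≤ F n := fun m n hm hmn => by
    rcases hmn.eq_or_lt with rfl | hlt
    · exact le_rfl
    · linarith [hF m n hm hlt]
  rcases hrp.eq_or_lt with rfl | hrp
  · have hqs : q ≠ s := fun hqs => h₁ ⟨rfl, hqs⟩
    rw [show F r + F q - F r - F s = F q - F s by ring, abs_lt] at h
    rcases hqs.lt_or_gt with hqs | hqs
    · linarith [hF q s hq hqs]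
    · linarith [hF s q hs hqs]
  · refine ⟨p, q, r, s, hq, lt_of_not_ge fun hsq => ?_, hsr, hrp, h⟩
    linarith [hF r p hr hrp, hmono s q hs hsq, (abs_lt.1 h).2]

lemma summable_pow_div_pow_sub_div {c : ℝ} (hc : 1 < c) (d j k : ℕ) (hk : 0 < k) :
    Summable fun n : ℕ => (n : ℝ) ^ d / c ^ ((n - j) / k) := by
  set ρ := c ^ ((k : ℝ)⁻¹)
  have hρ : 1 < ρ := Real.one_lt_rpow hc (by positivity)
  have hρk : ρ ^ k = c := Real.rpow_inv_natCast_pow (by linarith) hk.ne'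
  have hgeom : Summable fun n : ℕ => (n : ℝ) ^ d * ρ⁻¹ ^ n :=
    summable_pow_mul_geometric_of_norm_lt_one d (by
      rw [norm_inv, Real.norm_of_nonneg (by linarith)]; exact inv_lt_one_of_one_lt₀ hρ)
  refine Summable.of_nonneg_of_le (fun n => by positivity) (fun n => ?_)
    (hgeom.mul_left (ρ ^ (j + k)))
  have hn : n ≤ k * ((n - j) / k) + (j + k) := by
    have := Nat.div_add_mod (n - j) k
    have := Nat.mod_lt (n - j) hk
    omega
  have hρn : ρ ^ n ≤ ρ ^ (k * ((n - j) / k)) * ρ ^ (j + k) := by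
    rw [← pow_add]; exact pow_le_pow_right₀ hρ.le hn
  rw [← hρk, ← pow_mul, inv_pow, div_eq_mul_inv, mul_left_comm]
  gcongr
  rw [← div_eq_mul_inv, le_div_iff₀ (by positivity), inv_mul_le_iff₀ (by positivity)]
  linarith

def badSet (c : ℝ) (p : ℕ) : Set ℝ :=
  {x ∈ Ioo c 2 | ∃ q r s : ℕ, q < s ∧ s ≤ r ∧ r < p ∧ x ∈ nearCollisionSet p q r s}

lemma volume_badSet_le {c : ℝ} {G : ℕ} (hc : 1 ≤ c) (hG : 4 ≤ c ^ G) (p : ℕ) :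
    volume (badSet c p) ≤ ENNReal.ofReal (44 * ((p : ℝ) ^ 3 / c ^ ((p - G) / 5))) := by
  set T := (Finset.range p ×ˢ Finset.range p ×ˢ Finset.range p).filter
    fun t : ℕ × ℕ × ℕ => t.1 < t.2.2 ∧ t.2.2 ≤ t.2.1
  have hsub : badSet c p ⊆
      ⋃ t ∈ T, Ioo c 2 ∩ nearCollisionSet p t.1 t.2.1 t.2.2 := by
    rintro x ⟨hx, q, r, s, hqs, hsr, hrp, hlt⟩
    exact mem_biUnion (x := (q, r, s)) (by simp [T]; omega) ⟨hx, hlt⟩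
  have hcard : (T.card : ENNReal) ≤ ENNReal.ofReal ((p : ℝ) ^ 3) := by
    rw [← Nat.cast_pow, ENNReal.ofReal_natCast]
    exact_mod_cast (Finset.card_filter_le _ _).trans (by simp [Finset.card_product, pow_three])
  calc volume (badSet c p)
      ≤ ∑ t ∈ T, volume (Ioo c 2 ∩ nearCollisionSet p t.1 t.2.1 t.2.2) :=
        (measure_mono hsub).trans (measure_biUnion_finset_le _ _)
    _ ≤ ∑ _t ∈ T, ENNReal.ofReal (44 / c ^ ((p - G) / 5)) := by
        refine Finset.sum_le_sum fun t ht => ?_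
        simp only [T, Finset.mem_filter, Finset.mem_product, Finset.mem_range] at ht
        exact volume_Ioo_inter_nearCollisionSet_le hc hG ht.2.1.le ht.2.2 ht.1.2.1
          (Nat.mul_div_le _ _)
    _ ≤ ENNReal.ofReal ((p : ℝ) ^ 3) * ENNReal.ofReal (44 / c ^ ((p - G) / 5)) := by
        rw [Finset.sum_const, nsmul_eq_mul]
        gcongr
    _ = ENNReal.ofReal (44 * ((p : ℝ) ^ 3 / c ^ ((p - G) / 5))) := by
        rw [← ENNReal.ofReal_mul (by positivity)]
        ring_nf

lemma tsum_volume_badSet_ne_top {c : ℝ} (hc : 1 < c) :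
    ∑' p, volume (badSet c p) ≠ ⊤ := by
  obtain ⟨G, hG⟩ := pow_unbounded_of_one_lt 4 hc
  have hs := (summable_pow_div_pow_sub_div hc 3 G 5 (by norm_num)).mul_left 44
  exact ne_top_of_le_ne_top ENNReal.ofReal_ne_top
    ((ENNReal.tsum_le_tsum fun p => volume_badSet_le hc.le hG.le p).trans_eq
      (ENNReal.ofReal_tsum_of_nonneg (fun n => by positivity) hs).symm)

def IsSidon {α : Type*} [Add α] (A : Set α) : Prop :=
  ∀ a ∈ A, ∀ b ∈ A, ∀ c ∈ A, ∀ d ∈ A, a + b = c + d → ({a, b} : Set α) = {c, d}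

lemma exists_isSidon_floor_pow_of_eventually_notMem {c x : ℝ} (hc : 1 < c) (hx : x ∈ Ioo c 2)
    (h : ∀ᶠ p in atTop, x ∉ badSet c p) :
    ∃ N₀ : ℕ, IsSidon {a : ℤ | ∃ p, N₀ ≤ p ∧ a = ⌊x ^ p⌋} := by
  obtain ⟨L, hL⟩ := pow_unbounded_of_one_lt (2 / (c - 1)) hc
  have hL' : 2 ≤ (c - 1) * c ^ L := by
    rw [div_lt_iff₀ (by linarith)] at hL; linarith
  obtain ⟨N₁, hN₁⟩ := eventually_atTop.1 h
  refine ⟨max L N₁, ?_⟩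
  rintro _ ⟨p, hp, rfl⟩ _ ⟨q, hq, rfl⟩ _ ⟨r, hr, rfl⟩ _ ⟨s, hs, rfl⟩ heq
  by_contra hne
  obtain ⟨p', q', r', s', hq', hqs, hsr, hrp, hlt⟩ :=
    exists_lt_le_lt_of_abs_add_sub_sub_lt (F := (x ^ ·))
      (fun m n hm hmn => two_le_pow_sub_pow hc hx.1.le hL' (le_of_max_le_left hm) hmn)
      hp hq hr hs (by rintro ⟨rfl, rfl⟩; exact hne rfl)
      (by rintro ⟨rfl, rfl⟩; exact hne (pair_comm _ _))
      (abs_add_sub_sub_lt_two_of_floor_add_eq heq)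
  exact hN₁ p' (by omega) ⟨hx, q', r', s', hqs, hsr, hrp, hlt⟩

lemma ae_exists_isSidon_floor_pow {c : ℝ} (hc : 1 < c) :
    ∀ᵐ x, x ∈ Ioo c 2 → ∃ N₀ : ℕ, IsSidon {a : ℤ | ∃ p, N₀ ≤ p ∧ a = ⌊x ^ p⌋} := by
  filter_upwards [ae_eventually_notMem (tsum_volume_badSet_ne_top hc)] with x hx hxI
  exact exists_isSidon_floor_pow_of_eventually_notMem hc hxI hx

theorem stmt_7 :
    ∀ᵐ x ∂(volume.restrict (Set.Ioo (1 : ℝ) 2)),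
      ∃ N₀ : ℕ, ∀ a b c d : ℤ,
        (∃ p : ℕ, N₀ ≤ p ∧ a = ⌊x ^ p⌋) →
        (∃ q : ℕ, N₀ ≤ q ∧ b = ⌊x ^ q⌋) →
        (∃ r : ℕ, N₀ ≤ r ∧ c = ⌊x ^ r⌋) →
        (∃ s : ℕ, N₀ ≤ s ∧ d = ⌊x ^ s⌋) →
        a + b = c + d → ({a, b} : Set ℤ) = ({c, d} : Set ℤ) := by
  have hslice (k : ℕ) := ae_exists_isSidon_floor_pow (c := 1 + 1 / (k + 1 : ℝ))
    (lt_add_of_pos_right 1 (by positivity))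
  rw [ae_restrict_iff' measurableSet_Ioo]
  filter_upwards [ae_all_iff.2 hslice] with x hx hxI
  obtain ⟨k, hk⟩ := exists_nat_one_div_lt (sub_pos.2 hxI.1)
  obtain ⟨N₀, hN₀⟩ := hx k ⟨by linarith, hxI.2⟩
  exact ⟨N₀, fun a b c d ha hb hc hd => hN₀ a ha b hb c hc d hd⟩
end

section
/- Let ρ be the real root of t³ − t − 1, and suppose n is such that 2ρ^{−n/2} < 1/10 and cos(nω) ≠ 0, where α = |α|e^{iω} is a complex root. Then ⌊ρ^n⌋ = T_n − 1 if cos(nω) > 0, and ⌊ρ^n⌋ = T_n if cos(nω) < 0, where T_n = ρ^n + α^n + ᾱ^n ∈ ℤ. -/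
/-!
Since `α` and `conj α` are the other two roots of `t³ - t - 1`, the product of the roots gives
`ρ ‖α‖² = 1`, so `‖α‖ⁿ = ρ^(-n/2)`. Hence `T - ρⁿ = 2 Re αⁿ = 2 ‖α‖ⁿ cos (nω)` has absolute value
below `1/10`, and the sign of `cos (nω)` decides on which side of the integer `T` the number `ρⁿ`
lies.
-/

open ComplexConjugate

namespace Complex

theorem normSq_eq_of_quadratic_root {p q : ℝ} {α : ℂ} (h : α ^ 2 + p * α + q = 0)
    (him : α.im ≠ 0) : normSq α = q := by
  have hconj : conj α ^ 2 + p * conj α + q = 0 := by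
    simpa using congrArg conj h
  have hsub : α - conj α ≠ 0 := by
    rw [sub_conj]; simp [him, I_ne_zero]
  have hsum : α + conj α + p = 0 :=
    (mul_eq_zero.mp (by linear_combination h - hconj :
      (α - conj α) * (α + conj α + p) = 0)).resolve_left hsub
  have : (normSq α : ℂ) = q := by
    rw [← mul_conj]; linear_combination α * hsum - h
  exact_mod_cast this

theorem mul_normSq_eq_of_depressed_cubic_roots {b c ρ : ℝ} {α : ℂ}
    (hρ : ρ ^ 3 + b * ρ + c = 0) (hα : α ^ 3 + b * α + c = 0) (him : α.im ≠ 0) :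
    ρ * normSq α = -c := by
  have hne : α - ρ ≠ 0 := sub_ne_zero.mpr fun h => him (by simp [h])
  have hρ' : (ρ : ℂ) ^ 3 + b * ρ + c = 0 := by exact_mod_cast hρ
  have hquad : α ^ 2 + ρ * α + (ρ ^ 2 + b : ℝ) = 0 := by
    refine (mul_eq_zero.mp ?_).resolve_left hne
    push_cast
    linear_combination hα - hρ'
  rw [normSq_eq_of_quadratic_root hquad him]
  linear_combination hρ

theorem re_pow_of_eq_norm_mul_exp {α : ℂ} {ω : ℝ}
    (h : α = ‖α‖ * exp (ω * I)) (n : ℕ) : (α ^ n).re = ‖α‖ ^ n * Real.cos (n * ω) := by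
  have : α ^ n = (‖α‖ ^ n : ℝ) * exp ((n * ω : ℝ) * I) := by
    conv_lhs => rw [h, mul_pow, ← exp_nat_mul]
    push_cast; ring_nf
  rw [this, re_ofReal_mul, exp_ofReal_mul_I_re]

end Complex

theorem pow_eq_rpow_neg_half_of_sq_eq_inv {ρ A : ℝ} (hρ : 0 < ρ) (hA : 0 ≤ A)
    (h : A ^ 2 = ρ⁻¹) (n : ℕ) : A ^ n = ρ ^ (-(n : ℝ) / 2) := by
  have : A = ρ ^ (-(1 : ℝ) / 2) := by
    rw [← Real.sqrt_sq hA, h, Real.sqrt_eq_rpow, Real.inv_rpow hρ.le, ← Real.rpow_neg hρ.le]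
    norm_num
  rw [this, ← Real.rpow_mul_natCast hρ.le]
  ring_nf

theorem stmt_12_general (ρ : ℝ) (hρ : ρ ^ 3 - ρ - 1 = 0) (hρ1 : 1 < ρ)
    (α : ℂ) (hα : α ^ 3 - α - 1 = 0) (him : α.im ≠ 0)
    (ω : ℝ)
    (hαω : α = (‖α‖ : ℂ) * Complex.exp (ω * Complex.I))
    (n : ℕ) (T : ℤ)
    (hT : (T : ℂ) = (ρ : ℂ) ^ n + α ^ n + (starRingEnd ℂ α) ^ n)
    (hsmall : 2 * ρ ^ (-(n : ℝ) / 2) < 1 / 10) :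
    (0 < Real.cos (n * ω) → ⌊ρ ^ n⌋ = T - 1) ∧
    (Real.cos (n * ω) < 0 → ⌊ρ ^ n⌋ = T) := by
  have hρ0 : 0 < ρ := by linarith
  have hnorm : ‖α‖ ^ 2 = ρ⁻¹ := by
    have := Complex.mul_normSq_eq_of_depressed_cubic_roots (b := -1) (c := -1)
      (by linear_combination hρ) (by push_cast; linear_combination hα) him
    refine eq_inv_of_mul_eq_one_left ?_
    rw [← Complex.normSq_eq_norm_sq, mul_comm, this, neg_neg]
  have hTre : (T : ℝ) = ρ ^ n + 2 * (‖α‖ ^ n * Real.cos (n * ω)) := by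
    have := congrArg Complex.re hT
    rw [← map_pow, Complex.add_re, Complex.add_re, Complex.conj_re,
      Complex.re_pow_of_eq_norm_mul_exp hαω, ← Complex.ofReal_pow, Complex.ofReal_re,
      Complex.intCast_re] at this
    linarith
  have hAn : 0 < ‖α‖ ^ n := pow_pos (norm_pos_iff.mpr fun h => him (by simp [h])) n
  have herr : |2 * (‖α‖ ^ n * Real.cos (n * ω))| < 1 / 10 := by
    rw [← pow_eq_rpow_neg_half_of_sq_eq_inv hρ0 (norm_nonneg α) hnorm] at hsmall
    rw [abs_mul, abs_mul, abs_two, abs_of_pos hAn]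
    nlinarith [Real.abs_cos_le_one (n * ω)]
  obtain ⟨hlo, hhi⟩ := abs_lt.mp herr
  refine ⟨fun hpos => ?_, fun hneg => ?_⟩ <;> rw [Int.floor_eq_iff] <;> push_cast
  · have := mul_pos hAn hpos
    constructor <;> linarith
  · have := mul_neg_of_pos_of_neg hAn hneg
    constructor <;> linarith

theorem stmt_12 (ρ : ℝ) (hρ : ρ ^ 3 - ρ - 1 = 0) (hρ1 : 1 < ρ)
    (α : ℂ) (hα : α ^ 3 - α - 1 = 0) (him : α.im ≠ 0)
    (ω : ℝ) (hω : ω ∈ Set.Ioo 0 Real.pi)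
    (hαω : α = (‖α‖ : ℂ) * Complex.exp (ω * Complex.I))
    (n : ℕ) (T : ℤ)
    (hT : (T : ℂ) = (ρ : ℂ) ^ n + α ^ n + (starRingEnd ℂ α) ^ n)
    (hsmall : 2 * ρ ^ (-(n : ℝ) / 2) < 1 / 10)
    (hcos : Real.cos (n * ω) ≠ 0) :
    (0 < Real.cos (n * ω) → ⌊ρ ^ n⌋ = T - 1) ∧
    (Real.cos (n * ω) < 0 → ⌊ρ ^ n⌋ = T) :=
  stmt_12_general ρ hρ hρ1 α hα him ω hαω n T hT hsmall
end

section
/- Let α, ᾱ be the complex conjugate roots of t³ − t − 1 and write α = |α| e^{iω} with ω ∈ (0, π). Then ω/π is irrational. -/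
/-!
If `ω / π` were rational, some power `α ^ n` with `n ≠ 0` would be real, i.e. `α ^ n = ᾱ ^ n`.
Every root `x` of `t³ - t - 1` satisfies `x ^ n = a + b x + c x²` with the same integers
`a, b, c`; subtracting the two expansions and dividing by `α - ᾱ` gives `b + c (α + ᾱ) = 0`.
Since `-(α + ᾱ)` is the third root, which is not rational, `c = b = 0` and `α ^ n = a` is a
nonzero integer. But `|α|² = α ᾱ = (α + ᾱ)² - 1 < 1`.
-/

open Complex ComplexConjugate Polynomial

theorem Rat.pow_three_ne_add_one (q : ℚ) : q ^ 3 ≠ q + 1 := by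
  have hirr := X_pow_sub_X_sub_one_irreducible_rat (n := 3) (by norm_num)
  have hdeg : (X ^ 3 - X - 1 : ℚ[X]).natDegree = 3 := by compute_degree!
  intro hq
  exact hirr.not_isRoot_of_natDegree_ne_one (by omega) (x := q) (by simp [hq])

theorem exists_int_forall_pow_eq_of_pow_three_eq {R : Type*} [CommRing R] (n : ℕ) :
    ∃ a b c : ℤ, ∀ x : R, x ^ 3 = x + 1 → x ^ n = a + b * x + c * x ^ 2 := by
  induction n with
  | zero => exact ⟨1, 0, 0, fun x _ => by simp⟩
  | succ n ih =>
    obtain ⟨a, b, c, h⟩ := ih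
    refine ⟨c, a + c, b, fun x hx => ?_⟩
    rw [pow_succ, h x hx]
    push_cast
    linear_combination (c : R) * hx

section Field

variable {K : Type*} [Field K] {x y : K}

theorem sq_add_mul_add_sq_eq_one_of_pow_three_eq (hx : x ^ 3 = x + 1) (hy : y ^ 3 = y + 1)
    (hxy : x ≠ y) : x ^ 2 + x * y + y ^ 2 = 1 := by
  have h : (x - y) * (x ^ 2 + x * y + y ^ 2 - 1) = 0 := by linear_combination hx - hy
  linear_combination (mul_eq_zero.mp h).resolve_left (sub_ne_zero.mpr hxy)

theorem neg_add_pow_three_eq (hx : x ^ 3 = x + 1) (hy : y ^ 3 = y + 1) (hxy : x ≠ y) :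
    (-(x + y)) ^ 3 = -(x + y) + 1 := by
  -- with `z = -(x + y)`, `t³ - t - 1 - (t - x)(t - y)(t - z) = (x² + xy + y² - 1) t + xyz - 1`;
  -- compare its values at `t = x` and `t = z`
  linear_combination hx + (-2 * x - y) * sq_add_mul_add_sq_eq_one_of_pow_three_eq hx hy hxy

theorem exists_int_pow_eq_of_pow_eq [CharZero K] (hx : x ^ 3 = x + 1) (hy : y ^ 3 = y + 1)
    (hxy : x ≠ y) {n : ℕ} (h : x ^ n = y ^ n) : ∃ a : ℤ, x ^ n = a := by
  obtain ⟨a, b, c, hpow⟩ := exists_int_forall_pow_eq_of_pow_three_eq (R := K) n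
  have hsum : (b : K) + c * (x + y) = 0 := by
    have h' : (x - y) * ((b : K) + c * (x + y)) = 0 := by
      linear_combination h - hpow x hx + hpow y hy
    exact (mul_eq_zero.mp h').resolve_left (sub_ne_zero.mpr hxy)
  rcases eq_or_ne c 0 with rfl | hc
  · obtain rfl : b = 0 := by exact_mod_cast (by simpa using hsum : (b : K) = 0)
    exact ⟨a, by simpa using hpow x hx⟩
  · have hq : -(x + y) = ((b / c : ℚ) : K) := by
      push_cast
      field_simp
      linear_combination -hsum
    refine absurd ?_ (Rat.pow_three_ne_add_one (b / c))
    exact_mod_cast hq ▸ neg_add_pow_three_eq hx hy hxy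

end Field

namespace Complex

variable {α : ℂ}

theorem normSq_lt_one_of_pow_three_eq (hα : α ^ 3 = α + 1) (him : α.im ≠ 0) :
    normSq α < 1 := by
  have hne : α ≠ conj α := fun h => him (conj_eq_iff_im.mp h.symm)
  have hα' : conj α ^ 3 = conj α + 1 := by simpa using congrArg conj hα
  set u := 2 * α.re
  have hu : (-u) ^ 3 = -u + 1 := by
    exact_mod_cast add_conj α ▸ neg_add_pow_three_eq hα hα' hne
  have hnormSq : (normSq α : ℂ) = (u : ℂ) ^ 2 - 1 := by
    rw [← mul_conj, ← add_conj]
    linear_combination -sq_add_mul_add_sq_eq_one_of_pow_three_eq hα hα' hne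
  have : normSq α = u ^ 2 - 1 := by exact_mod_cast hnormSq
  nlinarith [sq_nonneg (u + 1), sq_nonneg (u - 1)]

theorem conj_pow_ne_self_of_pow_three_eq (hα : α ^ 3 = α + 1) (him : α.im ≠ 0) {n : ℕ}
    (hn : n ≠ 0) : conj (α ^ n) ≠ α ^ n := by
  intro h
  have hne : α ≠ conj α := fun h => him (conj_eq_iff_im.mp h.symm)
  have hα' : conj α ^ 3 = conj α + 1 := by simpa using congrArg conj hα
  obtain ⟨a, ha⟩ := exists_int_pow_eq_of_pow_eq hα hα' hne (by rw [← map_pow, h])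
  have hα0 : α ≠ 0 := by rintro rfl; norm_num at hα
  have ha0 : a ≠ 0 := by rintro rfl; exact pow_ne_zero n hα0 (by simpa using ha)
  have : normSq α ^ n < 1 :=
    pow_lt_one₀ (normSq_nonneg α) (normSq_lt_one_of_pow_three_eq hα him) hn
  rw [← map_pow, ha, normSq_intCast] at this
  have : (1 : ℝ) ≤ (a : ℝ) ^ 2 := by
    exact_mod_cast (one_le_sq_iff_one_le_abs a).mpr (Int.one_le_abs ha0)
  linarith

end Complex

theorem stmt_13_general (α : ℂ) (hα : α ^ 3 - α - 1 = 0) (him : α.im ≠ 0)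
    (ω : ℝ)
    (hαω : α = (‖α‖ : ℂ) * Complex.exp (ω * Complex.I)) :
    Irrational (ω / Real.pi) := by
  rintro ⟨r, hr⟩
  have hω : ω = r * Real.pi := by rw [hr, div_mul_cancel₀ _ Real.pi_ne_zero]
  have hreal : α ^ (2 * r.den) = ((‖α‖ ^ (2 * r.den) : ℝ) : ℂ) := by
    conv_lhs => rw [hαω]
    rw [mul_pow, hω, ofReal_mul, ofReal_ratCast, exp_rat_mul_pi_mul_I_pow_two_mul_den, mul_one,
      ofReal_pow]
  refine conj_pow_ne_self_of_pow_three_eq (by linear_combination hα) him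
    (mul_ne_zero two_ne_zero r.den_ne_zero) ?_
  rw [hreal, conj_ofReal]

theorem stmt_13 (α : ℂ) (hα : α ^ 3 - α - 1 = 0) (him : α.im ≠ 0)
    (ω : ℝ) (hω : ω ∈ Set.Ioo 0 Real.pi)
    (hαω : α = (‖α‖ : ℂ) * Complex.exp (ω * Complex.I)) :
    Irrational (ω / Real.pi) :=
  stmt_13_general α hα him ω hαω
end

section
/- Let ρ be the real root of t³ − t − 1 (the plastic constant). Then for every N₀ there exist infinitely many m ≥ N₀ with ⌊ρ^{m+4}⌋ + ⌊ρ^m⌋ = ⌊ρ^{m+3}⌋ + ⌊ρ^{m+2}⌋; in particular, {⌊ρ^n⌋ : n ≥ N₀} is not a Sidon set for any N₀. -/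
/-!
The Perrin numbers `P` (`P 0 = 3`, `P 1 = 0`, `P 2 = 2`, `P (n + 3) = P (n + 1) + P n`) are the
power sums `ρ ^ n + α ^ n + ᾱ ^ n` of the roots of `t³ - t - 1`, and `|α| ^ 2 = 1 / ρ`, so the error
`e n = P n - ρ ^ n` tends to `0`. In real terms: `e` satisfies the two-term recurrence of the
quadratic factor, whose associated binary quadratic form is positive definite and shrinks by `1 / ρ`
at each step, giving `e n ^ 2 * ρ ^ n ≤ 4`. Hence eventually `⌊ρ ^ n⌋ = P n - [e n > 0]`, and since
`P (m + 4) + P m = P (m + 3) + P (m + 2)` the floor identity at `m` is the same identity for the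
sign indicators of `e`. The signs of `e` cannot alternate forever, since then `|e|` would be
nondecreasing; and as soon as two consecutive signs agree, the recurrence forces the identity at one
of the next three indices. Finally `⌊ρ ^ (m + 4)⌋ > ⌊ρ ^ (m + 3)⌋ ≥ ⌊ρ ^ (m + 2)⌋` for large `m`, so
each such `m` is a violation of the Sidon property.
-/

open Filter Topology

def perrin : ℕ → ℤ
  | 0 => 3
  | 1 => 0
  | 2 => 2
  | n + 3 => perrin (n + 1) + perrin n

theorem perrin_add_three (n : ℕ) : perrin (n + 3) = perrin (n + 1) + perrin n := rfl

section LinearRecurrence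

variable {R : Type*} [CommRing R]

/-- With `t³ - t - 1 = (t - ρ) (ρ t ^ 2 + ρ ^ 2 t + 1) / ρ`, the residual of `u` under the quadratic
factor is geometric with ratio `ρ`. -/
theorem quadratic_residual_eq_pow_mul {ρ : R} (hρ : ρ ^ 3 = ρ + 1) {u : ℕ → R}
    (hu : ∀ n, u (n + 3) = u (n + 1) + u n) (n : ℕ) :
    ρ * u (n + 2) + ρ ^ 2 * u (n + 1) + u n = ρ ^ n * (ρ * u 2 + ρ ^ 2 * u 1 + u 0) := by
  induction n with
  | zero => ring
  | succ n ih =>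
    linear_combination ρ * hu n - u (n + 1) * hρ + ρ * ih

theorem pow_mul_quadraticForm_eq_pow_mul {a b c : R} {u : ℕ → R}
    (hu : ∀ n, a * u (n + 2) + b * u (n + 1) + c * u n = 0) (n : ℕ) :
    a ^ n * (a * u (n + 1) ^ 2 + b * u (n + 1) * u n + c * u n ^ 2) =
      c ^ n * (a * u 1 ^ 2 + b * u 1 * u 0 + c * u 0 ^ 2) := by
  induction n with
  | zero => ring
  | succ n ih =>
    linear_combination a ^ n * (a * u (n + 2) - c * u n) * hu n + c * ih

end LinearRecurrence

theorem one_lt_of_pow_three_eq {ρ : ℝ} (hρ : ρ ^ 3 = ρ + 1) : 1 < ρ := by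
  by_contra! h
  nlinarith [mul_nonneg (sub_nonneg.2 h) (sq_nonneg (ρ + 1)),
    mul_nonneg (sub_nonneg.2 h) (sq_nonneg (ρ + 1 / 2))]

theorem perrin_sub_pow_add_three {ρ : ℝ} (hρ : ρ ^ 3 = ρ + 1) (n : ℕ) :
    (perrin (n + 3) : ℝ) - ρ ^ (n + 3) =
      ((perrin (n + 1) : ℝ) - ρ ^ (n + 1)) + ((perrin n : ℝ) - ρ ^ n) := by
  rw [perrin_add_three, Int.cast_add]
  linear_combination -ρ ^ n * hρ

theorem sq_perrin_sub_pow_mul_pow_le {ρ : ℝ} (hρ : ρ ^ 3 = ρ + 1) (n : ℕ) :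
    ((perrin n : ℝ) - ρ ^ n) ^ 2 * ρ ^ n ≤ 4 := by
  set e : ℕ → ℝ := fun n => (perrin n : ℝ) - ρ ^ n with he
  have hrec (n : ℕ) : e (n + 3) = e (n + 1) + e n := perrin_sub_pow_add_three hρ n
  have hrec₂ (n : ℕ) : ρ * e (n + 2) + ρ ^ 2 * e (n + 1) + 1 * e n = 0 := by
    rw [one_mul, quadratic_residual_eq_pow_mul hρ hrec]
    simp only [he, perrin]
    push_cast
    linear_combination -2 * ρ ^ n * hρ
  have hQ : ρ ^ n * (ρ * e (n + 1) ^ 2 + ρ ^ 2 * e (n + 1) * e n + 1 * e n ^ 2) = 4 - ρ ^ 3 := by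
    rw [pow_mul_quadraticForm_eq_pow_mul hrec₂ n]
    simp only [he, perrin]
    push_cast
    ring
  have hρ0 : 0 < ρ := by linarith [one_lt_of_pow_three_eq hρ]
  -- `4 - ρ ^ 3 > 0` makes the form positive definite; complete the square.
  have hpos : 0 < ρ * (4 - ρ ^ 3) := mul_pos hρ0 (by nlinarith)
  refine le_of_mul_le_mul_left ?_ hpos
  calc ρ * (4 - ρ ^ 3) * (e n ^ 2 * ρ ^ n)
      = 4 * ρ * (ρ ^ n * (ρ * e (n + 1) ^ 2 + ρ ^ 2 * e (n + 1) * e n + 1 * e n ^ 2))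
        - ρ ^ n * (2 * ρ * e (n + 1) + ρ ^ 2 * e n) ^ 2 := by ring
    _ ≤ 4 * ρ * (ρ ^ n * (ρ * e (n + 1) ^ 2 + ρ ^ 2 * e (n + 1) * e n + 1 * e n ^ 2)) :=
        sub_le_self _ (by positivity)
    _ = ρ * (4 - ρ ^ 3) * 4 := by rw [hQ]; ring

theorem tendsto_perrin_sub_pow {ρ : ℝ} (hρ : ρ ^ 3 = ρ + 1) :
    Tendsto (fun n => (perrin n : ℝ) - ρ ^ n) atTop (𝓝 0) := by
  have hρ0 : 0 < ρ := by linarith [one_lt_of_pow_three_eq hρ]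
  have hsq : Tendsto (fun n => ((perrin n : ℝ) - ρ ^ n) ^ 2) atTop (𝓝 0) := by
    have hgeom : Tendsto (fun n => 4 * ρ⁻¹ ^ n) atTop (𝓝 0) := by
      simpa using (tendsto_pow_atTop_nhds_zero_of_lt_one (inv_nonneg.2 hρ0.le)
        (inv_lt_one_of_one_lt₀ (one_lt_of_pow_three_eq hρ))).const_mul 4
    refine squeeze_zero (fun n => sq_nonneg _) (fun n => ?_) hgeom
    rw [inv_pow, ← div_eq_mul_inv, le_div_iff₀ (pow_pos hρ0 n)]
    exact sq_perrin_sub_pow_mul_pow_le hρ n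
  refine (tendsto_zero_iff_abs_tendsto_zero _).2 ?_
  simpa [Function.comp_def, Real.sqrt_sq_eq_abs] using hsq.sqrt

theorem floor_eq_sub_toInt_of_abs_sub_lt_one {R : Type*} [Ring R] [LinearOrder R]
    [IsStrictOrderedRing R] [FloorRing R] {x : R} {k : ℤ} (h : |(k : R) - x| < 1) :
    ⌊x⌋ = k - (decide (0 < (k : R) - x)).toInt := by
  obtain ⟨hlo, hhi⟩ := abs_lt.1 h
  rw [Int.floor_eq_iff]
  by_cases hpos : 0 < (k : R) - x
  · simp only [hpos, decide_true, Bool.toInt_true, Int.cast_sub, Int.cast_one, sub_add_cancel]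
    exact ⟨(sub_lt_comm.1 hhi).le, sub_pos.1 hpos⟩
  · simp only [hpos, decide_false, Bool.toInt_false, sub_zero]
    exact ⟨sub_nonpos.1 (not_lt.1 hpos), (neg_lt_sub_iff_lt_add.1 hlo).trans_eq (add_comm _ _)⟩

theorem frequently_pos_iff_pos_succ {x : ℕ → ℝ} (hx : ∀ n, x (n + 3) = x (n + 1) + x n)
    (hlim : Tendsto x atTop (𝓝 0)) : ∃ᶠ n in atTop, (0 < x n ↔ 0 < x (n + 1)) := by
  refine frequently_atTop.2 fun N => ?_
  by_contra halt
  simp only [not_exists, not_and] at halt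
  obtain ⟨n₀, hn₀N, hn₀⟩ : ∃ n₀, N ≤ n₀ ∧ 0 < x n₀ := by
    by_cases h : 0 < x N
    · exact ⟨N, le_rfl, h⟩
    · exact ⟨N + 1, N.le_succ, by by_contra h'; exact halt N le_rfl (iff_of_false h h')⟩
  have hsign (j : ℕ) : 0 < x (n₀ + j) ↔ Even j := by
    induction j with
    | zero => simpa using hn₀
    | succ j ih =>
      have := halt (n₀ + j) (by omega)
      rw [Nat.even_add_one, ← ih, ← add_assoc]
      tauto
  have hnonneg (j : ℕ) : 0 ≤ (-1) ^ j * x (n₀ + j) := by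
    rcases Nat.even_or_odd j with hj | hj
    · rw [hj.neg_one_pow, one_mul]
      exact ((hsign j).2 hj).le
    · rw [hj.neg_one_pow, neg_one_mul, neg_nonneg]
      exact not_lt.1 fun h => Nat.not_even_iff_odd.2 hj ((hsign j).1 h)
  -- `y j = (-1) ^ j * x (n₀ + j)` satisfies `y (j + 1) = y j + y (j + 3)`, so it is nondecreasing.
  have hmono (j : ℕ) : x n₀ ≤ (-1) ^ j * x (n₀ + j) := by
    induction j with
    | zero => simp
    | succ j ih =>
      have hstep : (-1) ^ (j + 1) * x (n₀ + (j + 1)) =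
          (-1) ^ j * x (n₀ + j) + (-1) ^ (j + 3) * x (n₀ + (j + 3)) := by
        rw [← add_assoc, ← add_assoc, hx]
        ring
      linarith [hnonneg (j + 3)]
  obtain ⟨M, hM⟩ := Metric.tendsto_atTop.1 hlim (x n₀) hn₀
  have hsmall := hM (n₀ + M) (by omega)
  rw [Real.dist_0_eq_abs] at hsmall
  have := (hmono M).trans (le_abs_self _)
  rw [abs_mul, abs_pow, abs_neg, abs_one, one_pow, one_mul] at this
  linarith

theorem frequently_toInt_add_toInt_eq {s : ℕ → Bool} (hs : ∀ k, s k = s (k + 1) → s (k + 3) = s k)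
    (h : ∃ᶠ n in atTop, s n = s (n + 1)) :
    ∃ᶠ m in atTop, (s (m + 4)).toInt + (s m).toInt = (s (m + 3)).toInt + (s (m + 2)).toInt := by
  rw [frequently_atTop] at h ⊢
  intro N
  obtain ⟨n, hn, hsn⟩ := h N
  -- a finite check on the signs of seven consecutive terms
  have key : ∀ b₀ b₁ b₂ b₃ b₄ b₅ b₆ : Bool, b₀ = b₁ → b₃ = b₀ → (b₁ = b₂ → b₄ = b₁) →
      (b₃ = b₄ → b₆ = b₃) →
      b₄.toInt + b₀.toInt = b₃.toInt + b₂.toInt ∨ b₅.toInt + b₁.toInt = b₄.toInt + b₃.toInt ∨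
        b₆.toInt + b₂.toInt = b₅.toInt + b₄.toInt := by
    decide
  rcases key (s n) (s (n + 1)) (s (n + 2)) (s (n + 3)) (s (n + 4)) (s (n + 5)) (s (n + 6)) hsn
    (hs n hsn) (hs (n + 1)) (hs (n + 3)) with h₀ | h₁ | h₂
  · exact ⟨n, hn, h₀⟩
  · exact ⟨n + 1, by omega, h₁⟩
  · exact ⟨n + 2, by omega, h₂⟩

theorem eventually_floor_pow_lt_floor_pow_succ {ρ : ℝ} (hρ : 1 < ρ) :
    ∀ᶠ n in atTop, ⌊ρ ^ n⌋ < ⌊ρ ^ (n + 1)⌋ := by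
  have hgap : Tendsto (fun n => ρ ^ n * (ρ - 1)) atTop atTop :=
    (tendsto_pow_atTop_atTop_of_one_lt hρ).atTop_mul_const (sub_pos.2 hρ)
  filter_upwards [hgap.eventually_ge_atTop 1] with n hn
  calc ⌊ρ ^ n⌋ < ⌊ρ ^ n⌋ + 1 := lt_add_one _
    _ = ⌊ρ ^ n + 1⌋ := (Int.floor_add_one _).symm
    _ ≤ ⌊ρ ^ (n + 1)⌋ := Int.floor_mono (by rw [pow_succ]; linarith)

theorem frequently_floor_pow_add_four_add_floor_pow_eq {ρ : ℝ} (hρ : ρ ^ 3 = ρ + 1) :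
    ∃ᶠ m in atTop, ⌊ρ ^ (m + 4)⌋ + ⌊ρ ^ m⌋ = ⌊ρ ^ (m + 3)⌋ + ⌊ρ ^ (m + 2)⌋ := by
  set e : ℕ → ℝ := fun n => (perrin n : ℝ) - ρ ^ n
  set s : ℕ → Bool := fun n => decide (0 < e n) with hs
  have hlim : Tendsto e atTop (𝓝 0) := tendsto_perrin_sub_pow hρ
  have hrec (n : ℕ) : e (n + 3) = e (n + 1) + e n := perrin_sub_pow_add_three hρ n
  have hs_rec (k : ℕ) (hk : s k = s (k + 1)) : s (k + 3) = s k := by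
    simp only [hs, decide_eq_decide, hrec] at hk ⊢
    rcases lt_or_ge 0 (e k) with h | h
    · exact iff_of_true (add_pos (hk.1 h) h) h
    · exact iff_of_false (not_lt.2 (add_nonpos (not_lt.1 (mt hk.2 (not_lt.2 h))) h)) (not_lt.2 h)
  have hsame : ∃ᶠ n in atTop, s n = s (n + 1) :=
    (frequently_pos_iff_pos_succ hrec hlim).mono fun n hn => decide_eq_decide.2 hn
  obtain ⟨N, hfloor⟩ : ∃ N, ∀ n ≥ N, ⌊ρ ^ n⌋ = perrin n - (s n).toInt := by
    refine eventually_atTop.1 ?_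
    filter_upwards [hlim.eventually (Metric.ball_mem_nhds 0 one_pos)] with n hn
    exact floor_eq_sub_toInt_of_abs_sub_lt_one (by simpa [Real.dist_eq] using hn)
  refine ((frequently_toInt_add_toInt_eq hs_rec hsame).and_eventually (eventually_ge_atTop N)).mono ?_
  rintro m ⟨hsign, hm⟩
  rw [hfloor (m + 4) (by omega), hfloor m hm, hfloor (m + 3) (by omega), hfloor (m + 2) (by omega),
    perrin_add_three (m + 1), perrin_add_three m]
  linear_combination -hsign

theorem stmt_17 (ρ : ℝ) (hρ : ρ ^ 3 - ρ - 1 = 0) :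
    (∀ N₀ : ℕ,
      {m : ℕ | N₀ ≤ m ∧
        ⌊ρ ^ (m + 4)⌋ + ⌊ρ ^ m⌋ = ⌊ρ ^ (m + 3)⌋ + ⌊ρ ^ (m + 2)⌋}.Infinite) ∧
    (∀ N₀ : ℕ, ¬ (∀ a b c d : ℤ,
        (∃ p : ℕ, N₀ ≤ p ∧ a = ⌊ρ ^ p⌋) →
        (∃ q : ℕ, N₀ ≤ q ∧ b = ⌊ρ ^ q⌋) →
        (∃ r : ℕ, N₀ ≤ r ∧ c = ⌊ρ ^ r⌋) →
        (∃ s : ℕ, N₀ ≤ s ∧ d = ⌊ρ ^ s⌋) →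
        a + b = c + d → ({a, b} : Set ℤ) = ({c, d} : Set ℤ))) := by
  have hρ' : ρ ^ 3 = ρ + 1 := by linear_combination hρ
  have hρ1 := one_lt_of_pow_three_eq hρ'
  have hfreq := frequently_floor_pow_add_four_add_floor_pow_eq hρ'
  have hgap : ∀ᶠ m in atTop, ⌊ρ ^ (m + 3)⌋ < ⌊ρ ^ (m + 4)⌋ :=
    (tendsto_add_atTop_nat 3).eventually (eventually_floor_pow_lt_floor_pow_succ hρ1)
  refine ⟨fun N₀ => ?_, fun N₀ hSidon => ?_⟩
  · refine Nat.frequently_atTop_iff_infinite.1 ?_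
    exact (hfreq.and_eventually (eventually_ge_atTop N₀)).mono fun m h => ⟨h.2, h.1⟩
  obtain ⟨m, hid, hN₀, hlt⟩ := (hfreq.and_eventually ((eventually_ge_atTop N₀).and hgap)).exists
  have hle : ⌊ρ ^ (m + 2)⌋ ≤ ⌊ρ ^ (m + 3)⌋ := Int.floor_mono (pow_le_pow_right₀ hρ1.le (by omega))
  have hmem : ⌊ρ ^ (m + 4)⌋ ∈ ({⌊ρ ^ (m + 3)⌋, ⌊ρ ^ (m + 2)⌋} : Set ℤ) := by
    rw [← hSidon _ _ _ _ ⟨m + 4, by omega, rfl⟩ ⟨m, hN₀, rfl⟩ ⟨m + 3, by omega, rfl⟩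
      ⟨m + 2, by omega, rfl⟩ hid]
    exact Set.mem_insert _ _
  rw [Set.mem_insert_iff, Set.mem_singleton_iff] at hmem
  omega
end
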